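/- arXiv:2008.00284 — 3 statements merged into one kernel-verified Lean document; each statement's English description precedes it below -/
import Mathlib

section
/- For all nonnegative integers n, p (with p ≥ 1) and q: the poly-Bernoulli polynomial with negative upper index satisfies B_n^{(-p)}(q) = sum_{j=1}^p S(p,j) * (-1)^{p+j} * j! * (j+q+1)^n, where S(p,j) is the Stirling number of the second kind. -/
open Finset

/-- `harmonic m` is the `m`-th harmonic number `H_m = ∑_{k=1}^m 1/k`. -/
def harmonic' (m : ℕ) : ℚ := ∑ k ∈ Finset.range m, 1/(k+1 : ℚ)

/-- Hyperharmonic numbers: `hyperh r n = h_n^{(r)}` with `h_n^{(0)} = 1/n`. -/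
def hyperh : ℕ → ℕ → ℚ
  | 0, n => if n = 0 then 0 else 1/(n:ℚ)
  | r+1, n => ∑ k ∈ Finset.Icc 1 n, hyperh r k

/-- Generalized hyperharmonic numbers: `GH p r n = H_n^{(p,r)}` with `H_k^{(p,0)} = 1/k^p`. -/
def GH (p : ℤ) : ℕ → ℕ → ℚ
  | 0, n => if n = 0 then 0 else (n:ℚ)^(-p)
  | r+1, n => ∑ k ∈ Finset.Icc 1 n, GH p r k

/-- Generalized harmonic numbers `H_m^{(p)} = ∑_{j=1}^m 1/j^p`. -/
def genH (p m : ℕ) : ℚ := ∑ j ∈ Finset.Icc 1 m, 1/(j:ℚ)^p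

/-- Hyper-sums: `hS p q n = S_p^{(q)}(n)` with `S_p^{(0)}(n) = ∑_{k=1}^n k^p`. -/
def hS (p : ℕ) : ℕ → ℕ → ℕ
  | 0, n => ∑ k ∈ Finset.Icc 1 n, k^p
  | q+1, n => ∑ k ∈ Finset.Icc 1 n, hS p q k

/-- Stirling numbers of the second kind. -/
def stirling2 : ℕ → ℕ → ℕ
  | 0, 0 => 1
  | 0, _+1 => 0
  | _+1, 0 => 0
  | n+1, k+1 => (k+1) * stirling2 n (k+1) + stirling2 n k

/-- `r`-Stirling numbers of the second kind: `rstirling2 r n k = {n+r, k+r}_r`. -/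
def rstirling2 (r : ℕ) : ℕ → ℕ → ℕ
  | 0, 0 => 1
  | 0, _+1 => 0
  | n+1, 0 => r * rstirling2 r n 0
  | n+1, k+1 => (k+1+r) * rstirling2 r n (k+1) + rstirling2 r n k

/-- `r`-Stirling numbers of the first kind: `rstirling1 r n k = [n+r, k+r]_r`.
In particular `rstirling1 0 n k` is the unsigned Stirling number of the first kind. -/
def rstirling1 (r : ℕ) : ℕ → ℕ → ℕ
  | 0, 0 => 1
  | 0, _+1 => 0
  | n+1, 0 => (n+r) * rstirling1 r n 0
  | n+1, k+1 => (n+r) * rstirling1 r n (k+1) + rstirling1 r n k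

/-- Binomial coefficient with (possibly negative) integer upper argument. -/
def binomZ (x : ℤ) (k : ℕ) : ℚ :=
  (∏ i ∈ Finset.range k, ((x:ℚ) - i)) / (Nat.factorial k)

/-- Congruence of rationals mod `m`: `x ≡ y (mod m)` iff `m ∣ (x.num * y.den - y.num * x.den)`. -/
def ratMod (m : ℕ) (x y : ℚ) : Prop := (m:ℤ) ∣ (x.num * (y.den:ℤ) - y.num * (x.den:ℤ))

/-- Poly-Bernoulli numbers of negative index: `polyBN p n = B_n^{(-p)}`. -/
def polyBN (p n : ℕ) : ℤ :=
  (-1)^n * ∑ m ∈ Finset.range (n+1),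
    (stirling2 n m : ℤ) * (-1)^m * (Nat.factorial m : ℤ) * ((m:ℤ)+1)^p

/-- Poly-Bernoulli polynomial values of negative index: `polyBP p n q = B_n^{(-p)}(q)`. -/
def polyBP (p n q : ℕ) : ℤ :=
  ∑ j ∈ Finset.range (n+1), (n.choose j : ℤ) * polyBN p j * (q:ℤ)^(n-j)

/-! Expanding `(m+1)^p = (-1)^p (-(m+1))^p` in falling factorials through the Stirling numbers
`S(p,j)`, and using `m! · (-(m+1))(-(m+2))⋯(-(m+j)) = (-1)^j (m+j)!`, turns `B_n^{(-p)}` into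
`∑_{m,j} (-1)^(n+m+p+j) S(n,m) S(p,j) (m+j)!`, which is symmetric in `n` and `p`. The duality
`B_n^{(-p)} = B_p^{(-n)}` is the closed form for the numbers; the binomial theorem then shifts
`(j+1)^n` to `(j+q+1)^n`, and `S(p,0) = 0` for `p ≥ 1` removes the term `j = 0`. -/

open Polynomial
open scoped Nat

theorem stirling2_eq_stirlingSecond : stirling2 = Nat.stirlingSecond := by
  funext n k
  induction n generalizing k with
  | zero => cases k <;> rfl
  | succ n ih =>
    cases k with
    | zero => rfl
    | succ k => rw [stirling2, Nat.stirlingSecond_succ_succ, ih, ih]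

theorem X_pow_eq_sum_stirlingSecond_mul_descPochhammer (R : Type*) [CommRing R] (n : ℕ) :
    (X : R[X]) ^ n = ∑ k ∈ range (n + 1), (n.stirlingSecond k : R[X]) * descPochhammer R k := by
  induction n with
  | zero => simp
  | succ n ih =>
    have hX (k : ℕ) :
        X * descPochhammer R k = descPochhammer R (k + 1) + (k : R[X]) * descPochhammer R k := by
      rw [descPochhammer_succ_right]; ring
    have hshift : ∑ k ∈ range (n + 1), (k * n.stirlingSecond k : R[X]) * descPochhammer R k
        = ∑ k ∈ range (n + 1),
            ((k + 1) * n.stirlingSecond (k + 1) : R[X]) * descPochhammer R (k + 1) := by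
      rw [sum_range_succ', sum_range_succ _ n, Nat.stirlingSecond_eq_zero_of_lt n.lt_succ_self]
      simp
    calc (X : R[X]) ^ (n + 1)
        = ∑ k ∈ range (n + 1), ((n.stirlingSecond k : R[X]) * descPochhammer R (k + 1)
            + (k * n.stirlingSecond k : R[X]) * descPochhammer R k) := by
          rw [pow_succ', ih, mul_sum]
          exact sum_congr rfl fun k _ => by rw [mul_left_comm, hX]; ring
      _ = ∑ k ∈ range (n + 1),
            ((n + 1).stirlingSecond (k + 1) : R[X]) * descPochhammer R (k + 1) := by
          rw [sum_add_distrib, hshift, ← sum_add_distrib]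
          exact sum_congr rfl fun k _ => by rw [Nat.stirlingSecond_succ_succ]; push_cast; ring
      _ = ∑ k ∈ range (n + 2), ((n + 1).stirlingSecond k : R[X]) * descPochhammer R k := by
          rw [sum_range_succ' _ (n + 1), Nat.stirlingSecond_succ_zero]; simp

theorem pow_eq_sum_stirlingSecond_mul_descPochhammer_eval {R : Type*} [CommRing R] (n : ℕ)
    (x : R) :
    x ^ n = ∑ k ∈ range (n + 1), (n.stirlingSecond k : R) * (descPochhammer R k).eval x := by
  simpa [eval_finsetSum] using
    congrArg (eval x) (X_pow_eq_sum_stirlingSecond_mul_descPochhammer R n)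

theorem factorial_mul_descPochhammer_eval_neg {R : Type*} [CommRing R] (m j : ℕ) :
    (m ! : R) * (descPochhammer R j).eval (-(m + 1 : R)) = (-1) ^ j * (m + j)! := by
  have h := ascPochhammer_eval_neg_eq_descPochhammer R (-(m + 1 : R)) j
  rw [neg_neg] at h
  rw [← factorial_mul_ascPochhammer, h, mul_left_comm ((-1 : R) ^ j),
    ← mul_assoc ((-1 : R) ^ j), ← mul_pow]
  simp

theorem factorial_mul_succ_pow {R : Type*} [CommRing R] (m p : ℕ) :
    (m ! : R) * (m + 1) ^ p
      = ∑ j ∈ range (p + 1), (p.stirlingSecond j : R) * (-1) ^ (p + j) * (m + j)! := by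
  have hsign : ((m : R) + 1) ^ p = (-1) ^ p * (-(m + 1 : R)) ^ p := by
    rw [← mul_pow]; ring
  rw [hsign, pow_eq_sum_stirlingSecond_mul_descPochhammer_eval p (-(m + 1 : R)), mul_sum, mul_sum]
  refine sum_congr rfl fun j _ => ?_
  rw [mul_left_comm, mul_left_comm (m ! : R), factorial_mul_descPochhammer_eval_neg, pow_add]
  ring

theorem polyBN_eq_sum_sum (p n : ℕ) :
    polyBN p n = ∑ m ∈ range (n + 1), ∑ j ∈ range (p + 1),
      (n.stirlingSecond m : ℤ) * p.stirlingSecond j * (-1) ^ (n + m + (p + j)) * (m + j)! := by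
  rw [polyBN, stirling2_eq_stirlingSecond, mul_sum]
  refine sum_congr rfl fun m _ => ?_
  rw [mul_assoc, factorial_mul_succ_pow, mul_sum, mul_sum]
  refine sum_congr rfl fun j _ => ?_
  rw [pow_add, pow_add]
  ring

theorem polyBN_comm (p n : ℕ) : polyBN p n = polyBN n p := by
  rw [polyBN_eq_sum_sum, polyBN_eq_sum_sum, sum_comm]
  refine sum_congr rfl fun j _ => sum_congr rfl fun m _ => ?_
  rw [add_comm (n + m), add_comm m j]
  ring

theorem polyBN_eq_sum (p n : ℕ) :
    polyBN p n = ∑ j ∈ range (p + 1),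
      (p.stirlingSecond j : ℤ) * (-1) ^ (p + j) * j ! * ((j : ℤ) + 1) ^ n := by
  rw [polyBN_comm, polyBN, stirling2_eq_stirlingSecond, mul_sum]
  refine sum_congr rfl fun j _ => ?_
  rw [pow_add]
  ring

theorem polyBP_eq_sum (p n q : ℕ) :
    polyBP p n q = ∑ j ∈ range (p + 1),
      (p.stirlingSecond j : ℤ) * (-1) ^ (p + j) * j ! * ((j : ℤ) + q + 1) ^ n := by
  simp_rw [polyBP, polyBN_eq_sum, mul_sum, sum_mul]
  rw [sum_comm]
  refine sum_congr rfl fun j _ => ?_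
  rw [add_right_comm, add_pow, mul_sum]
  refine sum_congr rfl fun i _ => ?_
  ring

theorem stmt11 (n p q : ℕ) (hp : 1 ≤ p) :
    polyBP p n q = ∑ j ∈ Finset.Icc 1 p,
      (stirling2 p j : ℤ) * (-1:ℤ)^(p+j) * (Nat.factorial j : ℤ) * ((j:ℤ)+(q:ℤ)+1)^n := by
  obtain ⟨p, rfl⟩ := Nat.exists_eq_add_of_le' hp
  rw [polyBP_eq_sum, stirling2_eq_stirlingSecond, Nat.range_succ_eq_Icc_zero,
    ← insert_Icc_add_one_left_eq_Icc (Nat.zero_le _), sum_insert (by simp),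
    Nat.stirlingSecond_succ_zero]
  simp
end

section
/- For all positive integers n, q: S_{q-1}(n) = sum_{k=0}^q (-1)^k * S_{n+1}(q+n+1, k+n+1) * k! * h_n^{(k+1)}, where S_{n+1} denotes (n+1)-Stirling numbers of the second kind and h_n^{(k+1)} are hyperharmonic numbers. -/
open Finset

/-! The weights `(-1)^k k!` turn the `r`-Stirling recurrence into iteration of the difference
operator `(D_r f)(k) = (k + r) f(k) - (k + 1) f(k + 1)`, so that
`∑_k (-1)^k {s+r, k+r}_r k! f(k) = (D_r^s f)(0)`. For the generalized hyperharmonic numbers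
`H_n^{(p,r)}` the recurrence `(n + r) H_n^{(p,r)} - r H_n^{(p,r+1)} = H_n^{(p-1,r)}` says that
`D_{n+1}` lowers `p` by one on `k ↦ H_n^{(p,k+1)}`. Starting from `h_n^{(k+1)} = H_n^{(1,k+1)}`,
`q` steps reach `H_n^{(1-q,1)} = S_{q-1}(n)`. -/

section RStirling

variable {R : Type*} [CommRing R]

lemma rstirling2_eq_zero_of_lt (r : ℕ) {q k : ℕ} (h : q < k) : rstirling2 r q k = 0 := by
  induction q generalizing k with
  | zero => obtain ⟨k, rfl⟩ := Nat.exists_eq_succ_of_ne_zero h.ne'; rfl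
  | succ q ih =>
    obtain ⟨k, rfl⟩ := Nat.exists_eq_succ_of_ne_zero (by omega : k ≠ 0)
    simp only [rstirling2, ih (by omega : q < k + 1), ih (by omega : q < k), mul_zero, add_zero]

lemma sum_rstirling2_succ_mul (r q : ℕ) (f : ℕ → R) :
    ∑ k ∈ range (q + 2), (rstirling2 r (q + 1) k : R) * f k
      = ∑ k ∈ range (q + 1), (rstirling2 r q k : R) * ((k + r) * f k + f (k + 1)) := by
  calc ∑ k ∈ range (q + 2), (rstirling2 r (q + 1) k : R) * f k
      = ∑ k ∈ range (q + 2), (k + r) * (rstirling2 r q k : R) * f k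
          + ∑ k ∈ range (q + 1), (rstirling2 r q k : R) * f (k + 1) := by
        rw [sum_range_succ', sum_range_succ' (fun k => (k + r) * (rstirling2 r q k : R) * f k)]
        simp only [rstirling2, Nat.cast_add, Nat.cast_mul, Nat.cast_one, Nat.cast_zero, add_mul,
          sum_add_distrib]
        ring
    _ = ∑ k ∈ range (q + 1), (rstirling2 r q k : R) * ((k + r) * f k + f (k + 1)) := by
        rw [sum_range_succ _ (q + 1), rstirling2_eq_zero_of_lt r (Nat.lt_succ_self q)]
        simp only [Nat.cast_zero, mul_zero, zero_mul, add_zero, ← sum_add_distrib]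
        exact sum_congr rfl fun k _ => by ring

def rStirlingDiff (r : ℕ) (f : ℕ → R) (k : ℕ) : R := (k + r) * f k - (k + 1) * f (k + 1)

lemma sum_rstirling2_eq_iterate_rStirlingDiff (r s : ℕ) (f : ℕ → R) :
    ∑ k ∈ range (s + 1), (-1 : R) ^ k * (rstirling2 r s k : R) * (k.factorial : R) * f k
      = (rStirlingDiff r)^[s] f 0 := by
  induction s generalizing f with
  | zero => simp [rstirling2]
  | succ s ih =>
    calc ∑ k ∈ range (s + 2), (-1 : R) ^ k * (rstirling2 r (s + 1) k : R) * k.factorial * f k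
        = ∑ k ∈ range (s + 2), (rstirling2 r (s + 1) k : R) * ((-1) ^ k * k.factorial * f k) :=
          sum_congr rfl fun k _ => by ring
      _ = ∑ k ∈ range (s + 1),
            (-1 : R) ^ k * (rstirling2 r s k : R) * (k.factorial : R) * rStirlingDiff r f k := by
          rw [sum_rstirling2_succ_mul]
          refine sum_congr rfl fun k _ => ?_
          simp only [rStirlingDiff, Nat.factorial_succ, Nat.cast_mul, Nat.cast_add, Nat.cast_one]
          ring
      _ = (rStirlingDiff r)^[s + 1] f 0 := by rw [ih, Function.iterate_succ_apply]

end RStirling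

lemma GH_zero_right (p : ℤ) (r : ℕ) : GH p r 0 = 0 := by
  cases r <;> simp [GH]

lemma GH_succ_succ (p : ℤ) (r n : ℕ) : GH p (r + 1) (n + 1) = GH p (r + 1) n + GH p r (n + 1) :=
  sum_Icc_succ_top (by omega) _

lemma GH_sub_one (p : ℤ) (r n : ℕ) :
    GH (p - 1) r n = (n + r) * GH p r n - r * GH p (r + 1) n := by
  induction r generalizing n with
  | zero =>
    rcases Nat.eq_zero_or_pos n with rfl | hn
    · simp [GH]
    · have hn' : (n : ℚ) ≠ 0 := by positivity
      simp only [GH, hn.ne', if_false, Nat.cast_zero, add_zero, zero_mul, sub_zero]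
      rw [neg_sub, sub_eq_add_neg, zpow_add₀ hn', zpow_one, mul_comm]
  | succ r ih =>
    induction n with
    | zero => simp [GH_zero_right]
    | succ n ihn =>
      rw [GH_succ_succ, ihn, ih]
      push_cast
      linear_combination
        (r + 1 : ℚ) * GH_succ_succ p (r + 1) n - (n + r + 1 : ℚ) * GH_succ_succ p r n

lemma iterate_rStirlingDiff_GH (p : ℤ) (n s : ℕ) :
    (rStirlingDiff (n + 1))^[s] (fun k => GH p (k + 1) n) = fun k => GH (p - s) (k + 1) n := by
  induction s with
  | zero => simp
  | succ s ih =>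
    funext k
    rw [Function.iterate_succ_apply', ih, rStirlingDiff,
      show p - (s + 1 : ℕ) = p - s - 1 by push_cast; ring, GH_sub_one]
    push_cast
    ring

lemma hyperh_eq_GH_one (r n : ℕ) : hyperh r n = GH 1 r n := by
  induction r generalizing n with
  | zero => simp [hyperh, GH]
  | succ r ih => simp only [hyperh, GH, ih]

lemma GH_neg_natCast_one (j n : ℕ) : GH (-j) 1 n = hS j 0 n := by
  simp only [GH, hS, Nat.cast_sum, Nat.cast_pow, neg_neg, zpow_natCast]
  exact sum_congr rfl fun k hk => by simp [Nat.one_le_iff_ne_zero.mp (mem_Icc.mp hk).1]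

theorem stmt15_general (n q : ℕ) (hq : 0 < q) :
    (hS (q-1) 0 n : ℚ) = ∑ k ∈ Finset.range (q+1),
      (-1:ℚ)^k * (rstirling2 (n+1) q k : ℚ) * (Nat.factorial k : ℚ) * hyperh (k+1) n := by
  obtain ⟨j, rfl⟩ : ∃ j, q = j + 1 := ⟨q - 1, by omega⟩
  simp_rw [hyperh_eq_GH_one, sum_rstirling2_eq_iterate_rStirlingDiff, iterate_rStirlingDiff_GH,
    Nat.add_sub_cancel, ← GH_neg_natCast_one]
  congr 1
  push_cast
  ring

theorem stmt15 (n q : ℕ) (hn : 0 < n) (hq : 0 < q) :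
    (hS (q-1) 0 n : ℚ) = ∑ k ∈ Finset.range (q+1),
      (-1:ℚ)^k * (rstirling2 (n+1) q k : ℚ) * (Nat.factorial k : ℚ) * hyperh (k+1) n :=
  stmt15_general n q hq
end

section
/- For every prime number q ≥ 2 and every nonnegative integer r (with r arbitrary), and for k = 2, 3, ..., q-1, both the r-Stirling number of the first kind [q+r, k+r]_r and the r-Stirling number of the second kind {q+r, k+r}_r are divisible by q. -/
open Finset

/-!
In `(ZMod p)[X]` we have `∏_{a : ZMod p} (X - a) = X ^ p - X`. Up to shifting and negating the
index, `∏_{i<p} (X + r + i)` is this product, and its coefficients are the `[p+r, k+r]_r`.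
The `{p+r, k+r}_r` are the coordinates of `(X + r) ^ p` in the basis of falling factorials,
while by Fermat `(X + r) ^ p = X ^ p + r = descPochhammer p + descPochhammer 1 + r`.
-/

open Polynomial

theorem ZMod.prod_range_natCast {M : Type*} [CommMonoid M] (n : ℕ) [NeZero n]
    (f : ZMod n → M) : ∏ i ∈ range n, f i = ∏ x, f x :=
  Finset.prod_nbij' (↑) ZMod.val (by simp) (by simp [ZMod.val_lt])
    (fun i hi => ZMod.val_cast_of_lt (mem_range.1 hi)) (fun x _ => ZMod.natCast_zmod_val x)
    (fun _ _ => rfl)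

theorem FiniteField.prod_univ_X_sub_C (K : Type*) [Field K] [Fintype K] :
    ∏ a : K, (X - C a) = X ^ Fintype.card K - X := by
  have hmonic : (X ^ Fintype.card K - X : K[X]).Monic :=
    monic_X_pow_sub (degree_X_le.trans_lt (by exact_mod_cast Fintype.one_lt_card))
  have hcard : Multiset.card (X ^ Fintype.card K - X : K[X]).roots
      = (X ^ Fintype.card K - X : K[X]).natDegree := by
    rw [roots_X_pow_card_sub_X, X_pow_card_sub_X_natDegree_eq K Fintype.one_lt_card]
    rfl
  have := prod_multiset_X_sub_C_of_monic_of_roots_card_eq hmonic hcard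
  rwa [roots_X_pow_card_sub_X] at this

theorem ZMod.prod_univ_X_sub_C (p : ℕ) [Fact p.Prime] :
    ∏ a : ZMod p, (X - C a) = X ^ p - X := by
  rw [FiniteField.prod_univ_X_sub_C, ZMod.card]

theorem descPochhammer_eq_prod_range (R : Type*) [CommRing R] (n : ℕ) :
    descPochhammer R n = ∏ i ∈ range n, (X - C (i : R)) := by
  induction n with
  | zero => simp
  | succ n ih => rw [descPochhammer_succ_right, ih, prod_range_succ, C_eq_natCast]

theorem ZMod.descPochhammer_self (p : ℕ) [Fact p.Prime] :
    descPochhammer (ZMod p) p = X ^ p - X := by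
  rw [descPochhammer_eq_prod_range, ZMod.prod_range_natCast p (fun a => X - C a),
    ZMod.prod_univ_X_sub_C]

theorem ZMod.prod_range_X_add_C_add (p r : ℕ) [Fact p.Prime] :
    ∏ i ∈ range p, (X + C ((r + i : ℕ) : ZMod p)) = X ^ p - X := by
  push_cast
  rw [ZMod.prod_range_natCast p (fun a => X + C (r + a)),
    Fintype.prod_equiv (Equiv.addLeft (r : ZMod p)) (fun a => X + C (r + a)) (fun a => X + C a)
      (fun _ => rfl),
    ← Fintype.prod_equiv (Equiv.neg (ZMod p)) (fun a => X - C a) _ (by simp [sub_eq_add_neg]),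
    ZMod.prod_univ_X_sub_C]

theorem coeff_prod_range_X_add_C_eq_rstirling1 {R : Type*} [CommSemiring R] (r : ℕ) :
    ∀ n k, (∏ i ∈ range n, (X + C ((r + i : ℕ) : R))).coeff k = (rstirling1 r n k : R)
  | 0, 0 => by simp [rstirling1]
  | 0, k + 1 => by simp [rstirling1, coeff_one]
  | n + 1, 0 => by
    rw [prod_range_succ, mul_add, coeff_add, coeff_mul_X_zero, coeff_mul_C,
      coeff_prod_range_X_add_C_eq_rstirling1 r n 0, rstirling1]
    push_cast
    ring
  | n + 1, k + 1 => by
    rw [prod_range_succ, mul_add, coeff_add, coeff_mul_X, coeff_mul_C,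
      coeff_prod_range_X_add_C_eq_rstirling1 r n k,
      coeff_prod_range_X_add_C_eq_rstirling1 r n (k + 1), rstirling1]
    push_cast
    ring

theorem prime_dvd_rstirling1 {p k : ℕ} (r : ℕ) (hp : p.Prime) (hk : k ≠ 1) (hkp : k ≠ p) :
    p ∣ rstirling1 r p k := by
  have : Fact p.Prime := ⟨hp⟩
  rw [← ZMod.natCast_eq_zero_iff, ← coeff_prod_range_X_add_C_eq_rstirling1 (R := ZMod p),
    ZMod.prod_range_X_add_C_add, coeff_sub, coeff_X_pow, coeff_X, if_neg hkp, if_neg hk.symm,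
    sub_zero]

theorem rstirling2_eq_zero_of_lt_s19 (r : ℕ) : ∀ {n k : ℕ}, n < k → rstirling2 r n k = 0
  | 0, _ + 1, _ => rfl
  | n + 1, k + 1, h => by
    rw [rstirling2, rstirling2_eq_zero_of_lt_s19 r (by omega : n < k + 1),
      rstirling2_eq_zero_of_lt_s19 r (by omega : n < k), mul_zero]

theorem X_add_C_mul_descPochhammer {R : Type*} [CommRing R] (a : R) (k : ℕ) :
    (X + C a) * descPochhammer R k = descPochhammer R (k + 1) + (k + a) • descPochhammer R k := by
  rw [descPochhammer_succ_right, smul_eq_C_mul, C_add, C_eq_natCast]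
  ring

theorem X_add_C_pow_eq_sum_rstirling2 {R : Type*} [CommRing R] (r n : ℕ) :
    (X + C (r : R)) ^ n
      = ∑ k ∈ range (n + 1), (rstirling2 r n k : R) • descPochhammer R k := by
  induction n with
  | zero => simp [rstirling2]
  | succ n ih =>
    set D := descPochhammer R
    have hmul (k : ℕ) : (X + C (r : R)) * ((rstirling2 r n k : R) • D k)
        = (rstirling2 r n k : R) • D (k + 1) + ((k + r) * (rstirling2 r n k : R)) • D k := by
      rw [mul_smul_comm, X_add_C_mul_descPochhammer, smul_add, smul_smul, mul_comm]
    have hshift := sum_range_succ' (fun k => ((k + r : R) * rstirling2 r n k) • D k) (n + 1)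
    rw [sum_range_succ, rstirling2_eq_zero_of_lt_s19 r (Nat.lt_succ_self n), Nat.cast_zero, mul_zero,
      zero_smul, add_zero, zero_add] at hshift
    push_cast at hshift
    rw [pow_succ', ih, mul_sum, sum_range_succ' _ (n + 1)]
    simp only [hmul, sum_add_distrib, hshift, rstirling2, Nat.cast_add, Nat.cast_mul, Nat.cast_one,
      add_smul]
    abel

noncomputable def descPochhammerBasis (R : Type*) [CommRing R] [IsDomain R] :
    Module.Basis ℕ R R[X] :=
  Sequence.basis
    ⟨descPochhammer R, fun n => by
      rw [degree_eq_natDegree (monic_descPochhammer R n).ne_zero, descPochhammer_natDegree]⟩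
    (fun n => by simp [(monic_descPochhammer R n).leadingCoeff])

theorem descPochhammerBasis_apply (R : Type*) [CommRing R] [IsDomain R] (n : ℕ) :
    descPochhammerBasis R n = descPochhammer R n :=
  Sequence.basis_eq_self _ _ n

theorem prime_dvd_rstirling2 {p k : ℕ} (r : ℕ) (hp : p.Prime) (hk : 1 < k) (hkp : k < p) :
    p ∣ rstirling2 r p k := by
  have : Fact p.Prime := ⟨hp⟩
  have hpow : (X + C (r : ZMod p)) ^ p = descPochhammerBasis (ZMod p) p
      + descPochhammerBasis (ZMod p) 1 + (r : ZMod p) • descPochhammerBasis (ZMod p) 0 := by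
    simp only [descPochhammerBasis_apply, ZMod.descPochhammer_self, descPochhammer_one,
      descPochhammer_zero, smul_eq_C_mul, mul_one, add_pow_char, ← C_pow, ZMod.pow_card]
    ring
  have hcoord := congrArg (fun f => (descPochhammerBasis (ZMod p)).repr f k) hpow
  rw [X_add_C_pow_eq_sum_rstirling2] at hcoord
  rw [← ZMod.natCast_eq_zero_iff]
  simpa [← descPochhammerBasis_apply, Finsupp.single_apply, hkp.ne', hkp.le,
    show 1 ≠ k by omega, show 0 ≠ k by omega] using hcoord

theorem stmt19 (q r k : ℕ) (hq : q.Prime) (hk2 : 2 ≤ k) (hkq : k ≤ q - 1) :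
    (q:ℕ) ∣ rstirling1 r q k ∧ (q:ℕ) ∣ rstirling2 r q k := by
  have hkq' : k < q := by omega
  exact ⟨prime_dvd_rstirling1 r hq (by omega) hkq'.ne, prime_dvd_rstirling2 r hq hk2 hkq'⟩
end
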